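/- For n ≥ 4 and 2 ≤ i < j ≤ n−1, we have b(n,i,j) = 0; that is, no permutation in B_n can end with an ascent i, j where 2 ≤ i < j ≤ n−1. -/

import Mathlib

open List

/-- `w` is a linear permutation of `[n] = {1,…,n}` written in one-line notation. -/
def IsPermOf (n : ℕ) (w : List ℕ) : Prop :=
  w.Perm ((List.range n).map (· + 1))

/-- occurrence of the vincular pattern 1̄2̄3 : positions a, a+1, c with c > a+1
forming an increasing triple. -/
def Occ123 (w : List ℕ) : Prop :=
  ∃ a c, a + 1 < c ∧ c < w.length ∧
    w.getD a 0 < w.getD (a + 1) 0 ∧ w.getD (a + 1) 0 < w.getD c 0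

/-- occurrence of the vincular pattern 41\overline{23} : positions a < b < c (and c+1)
with w_b < w_c < w_{c+1} < w_a. -/
def Occ4123 (w : List ℕ) : Prop :=
  ∃ a b c, a < b ∧ b < c ∧ c + 1 < w.length ∧
    w.getD b 0 < w.getD c 0 ∧ w.getD c 0 < w.getD (c + 1) 0 ∧
    w.getD (c + 1) 0 < w.getD a 0

/-- occurrence of the vincular pattern 1\overline{23} : positions a < b (and b+1)
forming an increasing triple. -/
def Occ1_23 (w : List ℕ) : Prop :=
  ∃ a b, a < b ∧ b + 1 < w.length ∧
    w.getD a 0 < w.getD b 0 ∧ w.getD b 0 < w.getD (b + 1) 0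

/-- occurrence of the vincular pattern \overline{23}41 : positions a, a+1, c, d with
a+1 < c < d and w_d < w_a < w_{a+1} < w_c. -/
def Occ2341 (w : List ℕ) : Prop :=
  ∃ a c d, a + 1 < c ∧ c < d ∧ d < w.length ∧
    w.getD d 0 < w.getD a 0 ∧ w.getD a 0 < w.getD (a + 1) 0 ∧
    w.getD (a + 1) 0 < w.getD c 0

/-- a circular permutation (represented by any linear reading `w`) avoids
\overline{23}41 iff no cyclic rotation of `w` contains it. -/
def CircAvoids2341 (w : List ℕ) : Prop := ∀ k, ¬ Occ2341 (w.rotate k)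

/-- the set `L_n` of linear permutations of `[n]` avoiding both 1̄2̄3 and 41\overline{23}. -/
def Lset (n : ℕ) : Set (List ℕ) :=
  {w | IsPermOf n w ∧ ¬ Occ123 w ∧ ¬ Occ4123 w}

/-- the permutation (n−1)(n−2)⋯1 n. -/
def excludedPerm (n : ℕ) : List ℕ :=
  ((List.range (n - 1)).map (· + 1)).reverse ++ [n]

/-- `L_n^* = L_n \ {(n−1)(n−2)⋯1n}`. -/
def Lstar (n : ℕ) : Set (List ℕ) := Lset n \ {excludedPerm n}

/-- `B_n`: members of `L_n^*` in which 1 occurs to the right of n. -/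
def Bset (n : ℕ) : Set (List ℕ) :=
  {w ∈ Lstar n | w.idxOf n < w.idxOf 1}

/-- `C_n`: members of `L_n^*` in which 1 occurs to the left of n and 2 to its right. -/
def Cset (n : ℕ) : Set (List ℕ) :=
  {w ∈ Lstar n | w.idxOf 1 < w.idxOf n ∧ w.idxOf n < w.idxOf 2}

/-- members of `B_n` ending in the two letters i, j. -/
def Bnij (n i j : ℕ) : Set (List ℕ) :=
  {w ∈ Bset n | ∃ u, w = u ++ [i, j]}

/-- members of `C_n` ending in the two letters i, j. -/
def Cnij (n i j : ℕ) : Set (List ℕ) :=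
  {w ∈ Cset n | ∃ u, w = u ++ [i, j]}

noncomputable def bcount (n i j : ℕ) : ℕ := (Bnij n i j).ncard
noncomputable def ccount (n i j : ℕ) : ℕ := (Cnij n i j).ncard

/-- `b(n,j)`: the number of members of `B_n` ending in the letter j. -/
noncomputable def bLast (n j : ℕ) : ℕ := Set.ncard {w ∈ Bset n | ∃ u, w = u ++ [j]}

/-- `c(n,j)`: the number of members of `C_n` ending in the letter j. -/
noncomputable def cLast (n j : ℕ) : ℕ := Set.ncard {w ∈ Cset n | ∃ u, w = u ++ [j]}

/-- `V_n`: linear permutations of `[n]` avoiding both 1̄2̄3 and 1\overline{23}. -/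
def Vset (n : ℕ) : Set (List ℕ) :=
  {w | IsPermOf n w ∧ ¬ Occ123 w ∧ ¬ Occ1_23 w}

/-- `v(n,j)`: the number of members of `V_n` ending in the letter j. -/
noncomputable def vcount (n j : ℕ) : ℕ := Set.ncard {w ∈ Vset n | ∃ u, w = u ++ [j]}

/-! If `n` precedes `1` and the permutation ends with an ascent `i j` of letters strictly
between them in value, then `n, 1, i, j` is an occurrence of `41\overline{23}`. -/

theorem IsPermOf.mem {n a : ℕ} {w : List ℕ} (hw : IsPermOf n w) (h1 : 1 ≤ a) (hn : a ≤ n) :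
    a ∈ w := by
  rw [hw.mem_iff, List.mem_map]
  exact ⟨a - 1, List.mem_range.mpr (by omega), by omega⟩

theorem mem_of_mem_append_pair {u : List ℕ} {a i j : ℕ} (h : a ∈ u ++ [i, j])
    (hi : a ≠ i) (hj : a ≠ j) : a ∈ u := by
  simp_all

theorem getD_append_pair_of_lt {u : List ℕ} {i j k : ℕ} (hk : k < u.length) :
    (u ++ [i, j]).getD k 0 = u[k] := by
  simp [List.getD_eq_getElem?_getD, List.getElem?_append_left hk, List.getElem?_eq_getElem hk]

theorem getD_append_pair_length (u : List ℕ) (i j : ℕ) :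
    (u ++ [i, j]).getD u.length 0 = i := by
  simp [List.getD_eq_getElem?_getD]

theorem getD_append_pair_length_succ (u : List ℕ) (i j : ℕ) :
    (u ++ [i, j]).getD (u.length + 1) 0 = j := by
  simp [List.getD_eq_getElem?_getD]

theorem occ4123_append_pair {u : List ℕ} {x y i j : ℕ} (hx : x ∈ u) (hy : y ∈ u)
    (hxy : u.idxOf x < u.idxOf y) (hyi : y < i) (hij : i < j) (hjx : j < x) :
    Occ4123 (u ++ [i, j]) := by
  have hxlt : u.idxOf x < u.length := List.idxOf_lt_length_iff.mpr hx
  have hylt : u.idxOf y < u.length := List.idxOf_lt_length_iff.mpr hy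
  refine ⟨u.idxOf x, u.idxOf y, u.length, hxy, hylt, by simp, ?_, ?_, ?_⟩
  · rwa [getD_append_pair_of_lt hylt, List.getElem_idxOf, getD_append_pair_length]
  · rwa [getD_append_pair_length, getD_append_pair_length_succ]
  · rwa [getD_append_pair_length_succ, getD_append_pair_of_lt hxlt, List.getElem_idxOf]

theorem stmt3_general (n i j : ℕ) (hi : 2 ≤ i) (hij : i < j) (hj : j ≤ n - 1) :
    bcount n i j = 0 := by
  suffices Bnij n i j = ∅ by rw [bcount, this, Set.ncard_empty]
  refine Set.eq_empty_of_forall_notMem ?_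
  rintro w ⟨⟨⟨⟨hperm, -, h4123⟩, -⟩, hord⟩, u, rfl⟩
  have h1 : 1 ∈ u :=
    mem_of_mem_append_pair (hperm.mem le_rfl (by omega)) (by omega) (by omega)
  have hn : n ∈ u :=
    mem_of_mem_append_pair (hperm.mem (by omega) le_rfl) (by omega) (by omega)
  rw [List.idxOf_append_of_mem hn, List.idxOf_append_of_mem h1] at hord
  exact h4123 (occ4123_append_pair hn h1 hord (by omega) hij (by omega))

theorem stmt3 (n i j : ℕ) (hn : 4 ≤ n) (hi : 2 ≤ i) (hij : i < j) (hj : j ≤ n - 1) :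
    bcount n i j = 0 :=
  stmt3_general n i j hi hij hj
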